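/- arXiv:1806.03635 — 3 statements merged into one kernel-verified Lean document; each statement's English description precedes it below -/
import Mathlib

section
/- Let N be a normal subgroup of a finite group G such that G/N is abelian, and let π be an irreducible finite-dimensional complex representation of N. If π₁ and π₂ are irreducible finite-dimensional complex representations of G that both contain π upon restriction to N (i.e., Hom_N(π, Res_N π₁) ≠ 0 and Hom_N(π, Res_N π₂) ≠ 0), then there exists a group homomorphism χ : G → ℂˣ that is trivial on N such that π₂ ≅ π₁ ⊗ χ. -/
/-!
Since `π` is irreducible, an `N`-embedding `f₁ : π → π₁` has a left inverse `g₁`, and averaging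
`f₂ ∘ g₁` over `N` gives a nonzero `N`-intertwiner `π₁ → π₂`. Conjugation `F ↦ π₂ g ∘ F ∘ π₁ g⁻¹`
makes `G` act on `Hom_N(π₁, π₂)`, trivially on `N`, hence through the abelian group `G ⧸ N`; so
there is a common eigenvector `F`, with eigencharacter `χ`. Then `F` intertwines `π₁ ⊗ χ` with
`π₂`, and Schur's lemma makes it an isomorphism.
-/

noncomputable section

namespace RestrictionMult

variable {G : Type*} [Group G]

/-- The submodule of equivariant linear maps between two representations. -/
def equivariantHoms {V W : Type*} [AddCommGroup V] [Module ℂ V]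
    [AddCommGroup W] [Module ℂ W]
    (π : Representation ℂ G V) (σ : Representation ℂ G W) :
    Submodule ℂ (V →ₗ[ℂ] W) where
  carrier := {f | ∀ g v, f (π g v) = σ g (f v)}
  add_mem' := by intro f₁ f₂ h₁ h₂ g v; simp [h₁ g v, h₂ g v]
  zero_mem' := by intro g v; simp
  smul_mem' := by intro c f hf g v; simp [hf g v]

/-- Two representations are equivalent (isomorphic). -/
def IsRepEquiv {V W : Type*} [AddCommGroup V] [Module ℂ V]
    [AddCommGroup W] [Module ℂ W]
    (π : Representation ℂ G V) (σ : Representation ℂ G W) : Prop :=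
  ∃ e : V ≃ₗ[ℂ] W, ∀ g v, e (π g v) = σ g (e v)

/-- A representation is irreducible if the space is nonzero and the only invariant
submodules are `⊥` and `⊤`. -/
def IsIrreducibleRep {V : Type*} [AddCommGroup V] [Module ℂ V]
    (π : Representation ℂ G V) : Prop :=
  (∃ v : V, v ≠ 0) ∧
    ∀ U : Submodule ℂ V, (∀ g, ∀ v ∈ U, π g v ∈ U) → U = ⊥ ∨ U = ⊤

/-- The twist of a representation by a character `χ : G →* ℂˣ`. -/
def twist {V : Type*} [AddCommGroup V] [Module ℂ V]
    (π : Representation ℂ G V) (χ : G →* ℂˣ) : Representation ℂ G V where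
  toFun g := (χ g : ℂ) • π g
  map_one' := by simp
  map_mul' g h := by
    ext v
    simp only [Module.End.mul_apply, LinearMap.smul_apply, map_smul, map_mul, Units.val_mul,
      mul_smul]
    rw [smul_comm]

/-- The direct sum of two representations. -/
def dsum {V W : Type*} [AddCommGroup V] [Module ℂ V]
    [AddCommGroup W] [Module ℂ W]
    (π : Representation ℂ G V) (σ : Representation ℂ G W) :
    Representation ℂ G (V × W) where
  toFun g := (π g).prodMap (σ g)
  map_one' := by ext v <;> simp
  map_mul' g h := by ext v <;> simp [Module.End.mul_apply]

/-- The subrepresentation on an invariant submodule. -/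
def resSub {V : Type*} [AddCommGroup V] [Module ℂ V]
    (π : Representation ℂ G V) (U : Submodule ℂ V)
    (hU : ∀ g, ∀ v ∈ U, π g v ∈ U) : Representation ℂ G U where
  toFun g := (π g).restrict (fun v hv => hU g v hv)
  map_one' := by ext v; simp [LinearMap.restrict_apply]
  map_mul' g h := by ext v; simp [LinearMap.restrict_apply, Module.End.mul_apply]

/-- The conjugate `π^g` of a representation of a normal subgroup `N`,
given by `x ↦ π (g⁻¹ x g)`. -/
def conjRep {N : Subgroup G} [N.Normal] {V : Type*} [AddCommGroup V] [Module ℂ V]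
    (π : Representation ℂ N V) (g : G) : Representation ℂ N V :=
  π.comp (MulAut.conjNormal g⁻¹ : N ≃* N).toMonoidHom

/-- The space of the representation of `G` induced from a representation of a
subgroup `N`: functions `f : G → V` with `f (n * x) = π n (f x)`. -/
def indSubmodule (N : Subgroup G) {V : Type*} [AddCommGroup V] [Module ℂ V]
    (π : Representation ℂ N V) : Submodule ℂ (G → V) where
  carrier := {f | ∀ (n : N) (x : G), f (n * x) = π n (f x)}
  add_mem' := by intro f₁ f₂ h₁ h₂ n x; simp [h₁ n x, h₂ n x]
  zero_mem' := by intro n x; simp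
  smul_mem' := by intro c f hf n x; simp [hf n x]

/-- The representation of `G` induced from a representation `π` of a subgroup `N`,
acting by right translation on `indSubmodule N π`. -/
def ind (N : Subgroup G) {V : Type*} [AddCommGroup V] [Module ℂ V]
    (π : Representation ℂ N V) : Representation ℂ G (indSubmodule N π) where
  toFun g :=
    { toFun := fun f => ⟨fun x => (f : G → V) (x * g),
        fun n x => by simpa [mul_assoc] using f.2 n (x * g)⟩
      map_add' := fun f₁ f₂ => by ext x; rfl
      map_smul' := fun c f => by ext x; rfl }
  map_one' := by ext f x; simp
  map_mul' g h := by ext f x; simp [Module.End.mul_apply, mul_assoc]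

theorem _root_.Module.End.exists_common_eigenvector {ι K M : Type*} [Field K] [IsAlgClosed K]
    [AddCommGroup M] [Module K M] [FiniteDimensional K M] [Nontrivial M]
    (f : ι → Module.End K M) (hf : ∀ i j, Commute (f i) (f j)) :
    ∃ v : M, v ≠ 0 ∧ ∀ i, ∃ μ : K, f i v = μ • v := by
  obtain ⟨U, ⟨hU, hUf⟩, hUmin⟩ := wellFounded_lt.has_min
    {U : Submodule K M | U ≠ ⊥ ∧ ∀ i, U ≤ U.comap (f i)} ⟨⊤, top_ne_bot, fun _ => le_top⟩
  -- `U ⊓ eigenspace` is again invariant since the `f j` commute, so minimality of `U` forces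
  -- `U` into an eigenspace of each `f i`.
  have hU_le_eigenspace : ∀ i, ∃ μ, U ≤ (f i).eigenspace μ := by
    intro i
    have : Nontrivial U := Submodule.nontrivial_iff_ne_bot.mpr hU
    obtain ⟨μ, hμ⟩ := Module.End.exists_eigenvalue ((f i).restrict (hUf i))
    obtain ⟨u, hu⟩ := hμ.exists_hasEigenvector
    let E := U ⊓ (f i).eigenspace μ
    have hE : E ≠ ⊥ := (Submodule.ne_bot_iff E).mpr ⟨u, ⟨u.2, Module.End.mem_eigenspace_iff.mpr
      (congrArg Subtype.val hu.apply_eq_smul)⟩, by simpa using hu.2⟩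
    have hEf : ∀ j, E ≤ E.comap (f j) := fun j => by
      rw [Submodule.comap_inf]
      exact inf_le_inf (hUf j) fun v hv => Module.End.mapsTo_genEigenspace_of_comm (hf i j) μ 1 hv
    have hEU : E = U := inf_le_left.lt_or_eq.resolve_left (hUmin E ⟨hE, hEf⟩)
    exact ⟨μ, hEU ▸ inf_le_right⟩
  obtain ⟨v, hvU, hv⟩ := Submodule.exists_mem_ne_zero_of_ne_bot hU
  refine ⟨v, hv, fun i => ?_⟩
  obtain ⟨μ, hμ⟩ := hU_le_eigenspace i
  exact ⟨μ, Module.End.mem_eigenspace_iff.mp (hμ hvU)⟩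

theorem _root_.Representation.exists_eigencharacter_of_commute {H K W : Type*} [Group H]
    [Field K] [IsAlgClosed K] [AddCommGroup W] [Module K W] [FiniteDimensional K W]
    [Nontrivial W] (ρ : Representation K H W) (hρ : ∀ g h, Commute (ρ g) (ρ h)) :
    ∃ χ : H →* Kˣ, ∃ v : W, v ≠ 0 ∧ ∀ g, ρ g v = (χ g : K) • v := by
  obtain ⟨v, hv, hμ⟩ := Module.End.exists_common_eigenvector ρ hρ
  choose μ hμ using hμ
  have hμ_inj : Function.Injective fun a : K => a • v := smul_left_injective K hv
  let χ : H →* K :=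
    { toFun := μ
      map_one' := hμ_inj <| by simp only [← hμ, map_one, Module.End.one_apply, one_smul]
      map_mul' := fun g h => hμ_inj <| by
        change μ (g * h) • v = (μ g * μ h) • v
        rw [← hμ, map_mul, Module.End.mul_apply, hμ, map_smul, hμ, smul_smul, mul_comm] }
  exact ⟨χ.toHomUnits, v, hv, hμ⟩

theorem _root_.Representation.IsIntertwiningMap.map_averageMap {k H V W : Type*} [CommRing k]
    [Group H] [Fintype H] [Invertible (Fintype.card H : k)] [AddCommGroup V] [Module k V]
    [AddCommGroup W] [Module k W] {ρ : Representation k H V} {σ : Representation k H W}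
    {T : V →ₗ[k] W} (hT : ρ.IsIntertwiningMap σ T) (v : V) :
    T (ρ.averageMap v) = σ.averageMap (T v) := by
  simp [GroupAlgebra.average, map_sum, hT.isIntertwining]

section

open Representation (linHom)

variable {V W U : Type*} [AddCommGroup V] [Module ℂ V] [AddCommGroup W] [Module ℂ W]
  [AddCommGroup U] [Module ℂ U] {ρ : Representation ℂ G V} {σ : Representation ℂ G W}
  {τ : Representation ℂ G U}

theorem equivariantHoms_eq_invariants_linHom (ρ : Representation ℂ G V)
    (σ : Representation ℂ G W) :
    equivariantHoms ρ σ = (linHom ρ σ).invariants := by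
  ext f
  rw [Representation.mem_invariants]
  simp only [Representation.linHom_apply, Representation.mem_linHom_invariants_iff_isIntertwining,
    Representation.isIntertwiningMap_iff]
  rfl

@[simp]
theorem twist_apply (χ : G →* ℂˣ) (g : G) (v : V) : twist ρ χ g v = (χ g : ℂ) • ρ g v := rfl

theorem IsRepEquiv.symm (h : IsRepEquiv ρ σ) : IsRepEquiv σ ρ := by
  obtain ⟨e, he⟩ := h
  exact ⟨e.symm, fun g w => e.injective (by simp [he])⟩

theorem IsIrreducibleRep.injective_of_mem_equivariantHoms (hρ : IsIrreducibleRep ρ)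
    {f : V →ₗ[ℂ] W} (hf : f ∈ equivariantHoms ρ σ) (hf0 : f ≠ 0) : Function.Injective f := by
  refine LinearMap.ker_eq_bot.mp ((hρ.2 _ fun g v hv => ?_).resolve_right fun h => hf0 ?_)
  · rw [LinearMap.mem_ker] at hv ⊢
    rw [hf g v, hv, map_zero]
  · exact LinearMap.ker_eq_top.mp h

theorem IsIrreducibleRep.surjective_of_mem_equivariantHoms (hσ : IsIrreducibleRep σ)
    {f : V →ₗ[ℂ] W} (hf : f ∈ equivariantHoms ρ σ) (hf0 : f ≠ 0) : Function.Surjective f := by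
  refine LinearMap.range_eq_top.mp ((hσ.2 _ ?_).resolve_left fun h => hf0 ?_)
  · rintro g _ ⟨v, rfl⟩
    exact ⟨ρ g v, hf g v⟩
  · exact LinearMap.range_eq_bot.mp h

theorem isRepEquiv_of_mem_equivariantHoms (hρ : IsIrreducibleRep ρ) (hσ : IsIrreducibleRep σ)
    {f : V →ₗ[ℂ] W} (hf : f ∈ equivariantHoms ρ σ) (hf0 : f ≠ 0) : IsRepEquiv ρ σ :=
  ⟨LinearEquiv.ofBijective f ⟨hρ.injective_of_mem_equivariantHoms hf hf0,
    hσ.surjective_of_mem_equivariantHoms hf hf0⟩, hf⟩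

theorem IsIrreducibleRep.twist (hρ : IsIrreducibleRep ρ) (χ : G →* ℂˣ) :
    IsIrreducibleRep (twist ρ χ) := by
  refine ⟨hρ.1, fun U hU => hρ.2 U fun g v hv => ?_⟩
  have h := U.smul_mem (χ g : ℂ)⁻¹ (hU g v hv)
  rwa [twist_apply, smul_smul, inv_mul_cancel₀ (χ g).ne_zero, one_smul] at h

theorem mem_equivariantHoms_twist_of_linHom_apply_eq_smul (χ : G →* ℂˣ) {f : V →ₗ[ℂ] W}
    (hf : ∀ g, linHom ρ σ g f = (χ g : ℂ) • f) :
    f ∈ equivariantHoms (twist ρ χ) σ := by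
  intro g v
  have h := congrArg (fun f' => f' (ρ g v)) (hf g)
  simp only [Representation.linHom_apply, LinearMap.comp_apply, LinearMap.smul_apply] at h
  simp [← h, ← Module.End.mul_apply, ← map_mul]

theorem exists_mem_equivariantHoms_comp_eq [Fintype G] (hρ : IsIrreducibleRep ρ)
    {f₁ : V →ₗ[ℂ] W} (hf₁ : f₁ ∈ equivariantHoms ρ σ) (hf₁0 : f₁ ≠ 0)
    {f₂ : V →ₗ[ℂ] U} (hf₂ : f₂ ∈ equivariantHoms ρ τ) :
    ∃ A ∈ equivariantHoms σ τ, A ∘ₗ f₁ = f₂ := by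
  have : Invertible (Fintype.card G : ℂ) := invertibleOfNonzero (Nat.cast_ne_zero.mpr
    Fintype.card_ne_zero)
  obtain ⟨g₁, hg₁⟩ := f₁.exists_leftInverse_of_injective
    (LinearMap.ker_eq_bot.mpr (hρ.injective_of_mem_equivariantHoms hf₁ hf₁0))
  have hlcomp : (linHom σ τ).IsIntertwiningMap (linHom ρ τ)
      (LinearMap.lcomp ℂ U f₁) := ⟨fun g A => by
    ext v
    simp [hf₁ g⁻¹ v]⟩
  refine ⟨(linHom σ τ).averageMap (f₂ ∘ₗ g₁), ?_, ?_⟩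
  · rw [equivariantHoms_eq_invariants_linHom]
    exact Representation.averageMap_invariant _ _
  · have hf₂' : f₂ ∈ (linHom ρ τ).invariants := by
      rwa [← equivariantHoms_eq_invariants_linHom]
    calc _ = (linHom ρ τ).averageMap (f₂ ∘ₗ g₁ ∘ₗ f₁) :=
          hlcomp.map_averageMap (f₂ ∘ₗ g₁)
      _ = f₂ := by rw [hg₁, LinearMap.comp_id, Representation.averageMap_id _ _ hf₂']

theorem exists_character_mem_equivariantHoms_twist {N : Subgroup G} [N.Normal]
    (hab : ∀ a b : G ⧸ N, a * b = b * a) [FiniteDimensional ℂ V] [FiniteDimensional ℂ W]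
    (ρ : Representation ℂ G V) (σ : Representation ℂ G W)
    (h : equivariantHoms (ρ.comp N.subtype) (σ.comp N.subtype) ≠ ⊥) :
    ∃ χ : G →* ℂˣ, (∀ n ∈ N, χ n = 1) ∧ ∃ f ∈ equivariantHoms (twist ρ χ) σ, f ≠ 0 := by
  let ρN := (linHom ρ σ).quotientToInvariants N
  have : Nontrivial (Representation.invariants ((linHom ρ σ).comp N.subtype)) :=
    Submodule.nontrivial_iff_ne_bot.mpr
      (equivariantHoms_eq_invariants_linHom (ρ.comp N.subtype) (σ.comp N.subtype) ▸ h)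
  have hcomm : ∀ a b, Commute (ρN a) (ρN b) := fun a b => by
    rw [Commute, SemiconjBy, ← map_mul, ← map_mul, hab]
  obtain ⟨χ, F, hF, hχF⟩ := ρN.exists_eigencharacter_of_commute hcomm
  refine ⟨χ.comp (QuotientGroup.mk' N), fun n hn => by simp [(QuotientGroup.eq_one_iff n).mpr hn],
    F, mem_equivariantHoms_twist_of_linHom_apply_eq_smul _ fun g => congrArg Subtype.val (hχF g),
    by simpa using hF⟩

end

theorem twist_of_common_constituent_general
    {G : Type*} [Group G] [Finite G] (N : Subgroup G) [N.Normal]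
    (hab : ∀ a b : G ⧸ N, a * b = b * a)
    {V V₁ V₂ : Type*}
    [AddCommGroup V] [Module ℂ V]
    [AddCommGroup V₁] [Module ℂ V₁] [FiniteDimensional ℂ V₁]
    [AddCommGroup V₂] [Module ℂ V₂] [FiniteDimensional ℂ V₂]
    (π : Representation ℂ N V) (hπ : IsIrreducibleRep π)
    (π₁ : Representation ℂ G V₁) (hπ₁ : IsIrreducibleRep π₁)
    (π₂ : Representation ℂ G V₂) (hπ₂ : IsIrreducibleRep π₂)
    (h₁ : equivariantHoms π (π₁.comp N.subtype) ≠ ⊥)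
    (h₂ : equivariantHoms π (π₂.comp N.subtype) ≠ ⊥) :
    ∃ χ : G →* ℂˣ, (∀ n ∈ N, χ n = 1) ∧ IsRepEquiv π₂ (twist π₁ χ) := by
  have : Fintype N := Fintype.ofFinite N
  obtain ⟨f₁, hf₁, hf₁0⟩ := Submodule.exists_mem_ne_zero_of_ne_bot h₁
  obtain ⟨f₂, hf₂, hf₂0⟩ := Submodule.exists_mem_ne_zero_of_ne_bot h₂
  obtain ⟨A, hA, hAf₁⟩ := exists_mem_equivariantHoms_comp_eq hπ hf₁ hf₁0 hf₂
  have hA0 : A ≠ 0 := by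
    rintro rfl
    exact hf₂0 (by simp [← hAf₁])
  obtain ⟨χ, hχN, f, hf, hf0⟩ := exists_character_mem_equivariantHoms_twist hab π₁ π₂
    ((Submodule.ne_bot_iff _).mpr ⟨A, hA, hA0⟩)
  exact ⟨χ, hχN, (isRepEquiv_of_mem_equivariantHoms (hπ₁.twist χ) hπ₂ hf hf0).symm⟩

/-- If `N` is a normal subgroup of a finite group `G` with abelian
quotient, `π` is an irreducible complex representation of `N`, and `π₁`, `π₂` are
irreducible complex representations of `G` both containing `π` on restriction to `N`,
then `π₂ ≅ π₁ ⊗ χ` for some character `χ : G → ℂˣ` trivial on `N`. -/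
theorem twist_of_common_constituent
    {G : Type*} [Group G] [Finite G] (N : Subgroup G) [N.Normal]
    (hab : ∀ a b : G ⧸ N, a * b = b * a)
    {V V₁ V₂ : Type*}
    [AddCommGroup V] [Module ℂ V] [FiniteDimensional ℂ V]
    [AddCommGroup V₁] [Module ℂ V₁] [FiniteDimensional ℂ V₁]
    [AddCommGroup V₂] [Module ℂ V₂] [FiniteDimensional ℂ V₂]
    (π : Representation ℂ N V) (hπ : IsIrreducibleRep π)
    (π₁ : Representation ℂ G V₁) (hπ₁ : IsIrreducibleRep π₁)
    (π₂ : Representation ℂ G V₂) (hπ₂ : IsIrreducibleRep π₂)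
    (h₁ : equivariantHoms π (π₁.comp N.subtype) ≠ ⊥)
    (h₂ : equivariantHoms π (π₂.comp N.subtype) ≠ ⊥) :
    ∃ χ : G →* ℂˣ, (∀ n ∈ N, χ n = 1) ∧ IsRepEquiv π₂ (twist π₁ χ) :=
  twist_of_common_constituent_general N hab π hπ π₁ hπ₁ π₂ hπ₂ h₁ h₂

end RestrictionMult
end
end

section
/- Let E be a field equipped with a star ring structure (an involutive ring automorphism x ↦ star x), and let n ≥ 1. Let U(n,E) denote the matrix unitary group {g ∈ Mₙ(E) : gᴴ g = 1} (where gᴴ is the conjugate transpose with respect to star), let SU(n,E) = {g ∈ U(n,E) : det g = 1} be the special unitary group, let E₁ = {e ∈ E : (star e)·e = 1} be the group of unitary scalars, and let S = {e·1ₙ : e ∈ E₁} be the subgroup of unitary scalar matrices. Then the determinant map induces a group isomorphism from U(n,E)/(S·SU(n,E)) onto E₁/(E₁)ⁿ, where (E₁)ⁿ = {eⁿ : e ∈ E₁} is the subgroup of n-th powers. In particular, det : U(n,E) → E₁ is surjective, and an element g ∈ U(n,E) can be written as g = (e·1ₙ)·s with e ∈ E₁ and s ∈ SU(n,E) if and only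 if det g is an n-th power in E₁. -/
noncomputable section

namespace RestrictionMult

variable (n : ℕ) (E : Type*) [Field E] [StarRing E]

/-- The determinant, as a group homomorphism from the matrix unitary group `U(n,E)`
to the group `E₁ = unitary E` of unitary scalars. -/
def detHom : Matrix.unitaryGroup (Fin n) E →* unitary E where
  toFun g := ⟨Matrix.det (g : Matrix (Fin n) (Fin n) E), Matrix.det_of_mem_unitary g.2⟩
  map_one' := by ext; simp
  map_mul' g h := by ext; simp

/-- The embedding of the unitary scalars `E₁ = unitary E` into the matrix unitary group
`U(n,E)` as scalar matrices `e • 1ₙ`. -/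
def scalarHom : unitary E →* Matrix.unitaryGroup (Fin n) E where
  toFun e := ⟨(e : E) • (1 : Matrix (Fin n) (Fin n) E), by
    constructor
    · show star ((e : E) • (1 : Matrix (Fin n) (Fin n) E)) * _ = 1
      rw [star_smul, star_one, Matrix.smul_mul, Matrix.mul_smul, smul_smul, one_mul]
      rw [e.prop.1, one_smul]
    · show ((e : E) • (1 : Matrix (Fin n) (Fin n) E)) * _ = 1
      rw [star_smul, star_one, Matrix.smul_mul, Matrix.mul_smul, smul_smul, one_mul]
      rw [e.prop.2, one_smul]⟩
  map_one' := by
    ext i j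
    simp
  map_mul' e f := by
    ext i j
    simp [Matrix.smul_mul, Matrix.mul_smul, smul_smul]
    ring

lemma det_scalarHom (e : unitary E) : detHom n E (scalarHom n E e) = e ^ n := by
  ext
  show Matrix.det ((e : E) • (1 : Matrix (Fin n) (Fin n) E)) = (e : E) ^ n
  simp [Matrix.det_smul]

lemma detHom_surjective (hn : 1 ≤ n) : Function.Surjective (detHom n E) := by
  intro e
  set d : Fin n → E := fun i => if i = ⟨0, hn⟩ then (e : E) else 1 with hd
  have h1 : ∀ i, star (d i) * d i = 1 := by
    intro i; rw [hd]; dsimp only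
    split_ifs
    · exact e.prop.1
    · simp
  have h2 : ∀ i, d i * star (d i) = 1 := by
    intro i; rw [hd]; dsimp only
    split_ifs
    · exact e.prop.2
    · simp
  have hmem : Matrix.diagonal d ∈ Matrix.unitaryGroup (Fin n) E := by
    constructor
    · show star (Matrix.diagonal d) * Matrix.diagonal d = 1
      rw [Matrix.star_eq_conjTranspose, Matrix.diagonal_conjTranspose,
        Matrix.diagonal_mul_diagonal]
      rw [show (fun i => star d i * d i) = (fun _ => (1 : E)) from funext h1,
        Matrix.diagonal_one]
    · show Matrix.diagonal d * star (Matrix.diagonal d) = 1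
      rw [Matrix.star_eq_conjTranspose, Matrix.diagonal_conjTranspose,
        Matrix.diagonal_mul_diagonal]
      rw [show (fun i => d i * star d i) = (fun _ => (1 : E)) from funext h2,
        Matrix.diagonal_one]
  refine ⟨⟨Matrix.diagonal d, hmem⟩, ?_⟩
  ext
  show Matrix.det (Matrix.diagonal d) = (e : E)
  rw [Matrix.det_diagonal, hd]
  simp

lemma factor_iff (g : Matrix.unitaryGroup (Fin n) E) :
    (∃ (e : unitary E) (s : Matrix.unitaryGroup (Fin n) E),
        detHom n E s = 1 ∧ g = scalarHom n E e * s) ↔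
    ∃ e : unitary E, detHom n E g = e ^ n := by
  constructor
  · rintro ⟨e, s, hs, rfl⟩
    exact ⟨e, by rw [map_mul, hs, mul_one, det_scalarHom]⟩
  · rintro ⟨e, he⟩
    refine ⟨e, (scalarHom n E e)⁻¹ * g, ?_, by group⟩
    rw [map_mul, map_inv, det_scalarHom, he, inv_mul_cancel]

/-- Let `E` be a field with a star ring structure and `n ≥ 1`.  The
determinant induces a group isomorphism `U(n,E)/(S·SU(n,E)) ≃ E₁/(E₁)ⁿ`, where `S` is
the group of unitary scalar matrices, `SU(n,E)` is the special unitary group (the kernel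
of the determinant), and `(E₁)ⁿ` is the group of `n`-th powers of unitary scalars.
In particular, `det : U(n,E) → E₁` is surjective and `g ∈ U(n,E)` factors as
`g = (e·1ₙ)·s` with `e ∈ E₁`, `s ∈ SU(n,E)` iff `det g` is an `n`-th power in `E₁`. -/
theorem det_induces_iso_unitary_mod_scalars_special
    (hn : 1 ≤ n) :
    (∃ hnormal : ((scalarHom n E).range ⊔ (detHom n E).ker).Normal,
      haveI := hnormal
      ∃ φ : (Matrix.unitaryGroup (Fin n) E ⧸ ((scalarHom n E).range ⊔ (detHom n E).ker))
          ≃* (unitary E ⧸ (powMonoidHom n : unitary E →* unitary E).range),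
        ∀ g : Matrix.unitaryGroup (Fin n) E,
          φ (QuotientGroup.mk g) = QuotientGroup.mk (detHom n E g)) ∧
    Function.Surjective (detHom n E) ∧
    (∀ g : Matrix.unitaryGroup (Fin n) E,
      (∃ (e : unitary E) (s : Matrix.unitaryGroup (Fin n) E),
        detHom n E s = 1 ∧ g = scalarHom n E e * s) ↔
      ∃ e : unitary E, detHom n E g = e ^ n) := by
  set f : Matrix.unitaryGroup (Fin n) E →* (unitary E ⧸ (powMonoidHom n : unitary E →* unitary E).range) :=
    (QuotientGroup.mk' _).comp (detHom n E) with hf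
  have hfmem : ∀ g, g ∈ f.ker ↔ ∃ e : unitary E, detHom n E g = e ^ n := by
    intro g
    rw [MonoidHom.mem_ker, hf, MonoidHom.comp_apply, QuotientGroup.mk'_apply,
      QuotientGroup.eq_one_iff]
    constructor
    · rintro ⟨e, he⟩; exact ⟨e, he.symm⟩
    · rintro ⟨e, he⟩; exact ⟨e, he.symm⟩
  have hker : ((scalarHom n E).range ⊔ (detHom n E).ker) = f.ker := by
    apply le_antisymm
    · apply sup_le
      · rintro _ ⟨e, rfl⟩
        rw [hfmem]
        exact ⟨e, det_scalarHom n E e⟩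
      · intro g hg
        rw [hfmem]
        exact ⟨1, by rw [hg, one_pow]⟩
    · intro g hg
      rw [hfmem] at hg
      obtain ⟨e, s, hs, rfl⟩ := (factor_iff n E g).2 hg
      exact mul_mem (Subgroup.mem_sup_left ⟨e, rfl⟩) (Subgroup.mem_sup_right hs)
  have hfsurj : Function.Surjective f := by
    exact (QuotientGroup.mk'_surjective _).comp (detHom_surjective n E hn)
  refine ⟨?_, detHom_surjective n E hn, factor_iff n E⟩
  haveI hnormal : ((scalarHom n E).range ⊔ (detHom n E).ker).Normal := hker ▸ f.normal_ker
  refine ⟨hnormal, (QuotientGroup.quotientMulEquivOfEq hker).trans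
    (QuotientGroup.quotientKerEquivOfSurjective f hfsurj), fun g => ?_⟩
  rfl



end RestrictionMult
end
end

section
/- Let E be a field equipped with a star ring structure, let n be an odd positive integer, and let g be an invertible n×n matrix over E satisfying gᴴ g = a·1ₙ for some a ∈ E. Then a is a norm: a = (star e)·e for some unit e ∈ Eˣ. Consequently, every unitary similitude of odd size n is a product of a scalar matrix and a unitary matrix: g = e·u with e ∈ Eˣ and uᴴ u = 1ₙ. -/
noncomputable section

namespace RestrictionMult

/-- Let `E` be a field with a star ring structure, `n` an odd positive
integer, and `g` an invertible `n × n` matrix over `E` with `gᴴ * g = a • 1`.  Then the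
similitude factor `a` is a norm `a = (star e) * e`, and consequently `g` is a product of
a scalar matrix and a unitary matrix. -/
theorem odd_similitude_is_scalar_mul_unitary
    {E : Type*} [Field E] [StarRing E] {n : ℕ} (hodd : Odd n) (hn : 0 < n)
    (g : Matrix (Fin n) (Fin n) E) (hg : IsUnit g) {a : E}
    (ha : g.conjTranspose * g = a • (1 : Matrix (Fin n) (Fin n) E)) :
    (∃ e : Eˣ, a = star (e : E) * e) ∧
      ∃ (e : Eˣ) (u : Matrix (Fin n) (Fin n) E),
        u ∈ Matrix.unitaryGroup (Fin n) E ∧ g = (e : E) • u := by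
  obtain ⟨m, hm⟩ := hodd
  have hd : g.det ≠ 0 := ((Matrix.isUnit_iff_isUnit_det g).mp hg).ne_zero
  have hdet : star g.det * g.det = a ^ n := by
    have := congrArg Matrix.det ha
    simpa [Matrix.det_conjTranspose, Matrix.det_smul] using this
  have ha0 : a ≠ 0 := by
    intro h
    rw [h, zero_pow hn.ne'] at hdet
    exact hd (by simpa using mul_eq_zero.mp hdet)
  -- star a = a
  have hstar : star a = a := by
    have h2 := congrArg Matrix.conjTranspose ha
    rw [Matrix.conjTranspose_mul, Matrix.conjTranspose_conjTranspose, ha,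
      Matrix.conjTranspose_smul, Matrix.conjTranspose_one] at h2
    have := congrFun (congrFun h2 ⟨0, hn⟩) ⟨0, hn⟩
    simpa [Matrix.smul_apply, Matrix.one_apply] using this.symm
  set e0 : E := g.det * (a ^ m)⁻¹ with he0
  have he0ne : e0 ≠ 0 := mul_ne_zero hd (inv_ne_zero (pow_ne_zero _ ha0))
  have hnorm : star e0 * e0 = a := by
    have hse : star e0 = star g.det * (a ^ m)⁻¹ := by
      simp [he0, star_mul, star_inv₀, star_pow, hstar, mul_comm]
    rw [hse, he0]
    field_simp
    rw [mul_comm (star g.det) g.det, mul_comm g.det (star g.det), hdet, hm]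
    ring
  refine ⟨⟨Units.mk0 e0 he0ne, hnorm.symm⟩, Units.mk0 e0 he0ne, e0⁻¹ • g, ?_, ?_⟩
  · rw [Matrix.mem_unitaryGroup_iff']
    have : star (e0⁻¹ • g) = (star e0)⁻¹ • g.conjTranspose := by
      simp [Matrix.star_eq_conjTranspose, Matrix.conjTranspose_smul, star_inv₀]
    rw [this, Matrix.smul_mul, Matrix.mul_smul, ha, smul_smul, smul_smul,
      ← mul_inv, hnorm, inv_mul_cancel₀ ha0, one_smul]
  · simp [smul_smul, mul_inv_cancel₀ he0ne]

end RestrictionMult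
end
end
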